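/- Let Ω⊆R^n be open and F : Ω × (R^N⊗S(n)) → R^N a Carathéodory map satisfying Definition-1 ellipticity with rank-one positive A, λ>κ>0, and weight α (α, 1/α ∈ L^∞, α>0 a.e.), and suppose F(x,·) is Lipschitz with constant M uniformly in x. Then for all sufficiently large σ>0, F satisfies the K-condition with the same A, weight α'(x)=α(x)/(λσ), and constants β = (2/σ)(κ/λ + (1/(2σ))(M‖α‖_∞/(λν(A)))²), γ = 1 − 2/σ, which satisfy β+γ<1. -/

import Mathlib

/-!
With `t = α(x)/(λσ)` and `w = F(x,X+Z) − F(x,X)`, expand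
`|A:Z − t w|² = |A:Z|² − 2t⟨A:Z, w⟩ + t²|w|²`. The weight is chosen so that ellipticity turns
`2t⟨A:Z, w⟩` into at least `(2/σ)|A:Z|² − (2κ/(λσ)) ν²|Z|²`, while the Lipschitz bound
`|w|² ≤ M²|Z|²` and `t ≤ ‖α‖_∞/(λσ)` make `t²|w|²` of order `σ⁻²|Z|²`. Finally `β + γ < 1`
amounts to `κ/λ + O(1/σ) < 1`, which holds for large `σ` because `κ < λ`.
-/

open Finset MeasureTheory

/-- Tensors in `ℝ^N ⊗ ℝ^{n×n}` (hessian-type arguments). -/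
abbrev Tens (N n : ℕ) := Fin N → Fin n → Fin n → ℝ

/-- The contraction `A:Z ∈ ℝ^N`, `(A:Z)_α = A_{αβij} Z_{βij}`. -/
def contA {N n : ℕ} (A : Fin N → Fin N → Fin n → Fin n → ℝ) (Z : Tens N n) : Fin N → ℝ :=
  fun α => ∑ β, ∑ i, ∑ j, A α β i j * Z β i j

/-- Squared Euclidean norm on `ℝ^N`. -/
def vnorm2 {N : ℕ} (v : Fin N → ℝ) : ℝ := ∑ α, (v α) ^ 2

/-- Squared Frobenius norm on tensors. -/
def tnorm2 {N n : ℕ} (Z : Tens N n) : ℝ := ∑ α, ∑ i, ∑ j, (Z α i j) ^ 2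

lemma vnorm2_nonneg {N : ℕ} (v : Fin N → ℝ) : 0 ≤ vnorm2 v :=
  sum_nonneg fun _ _ => sq_nonneg _

lemma tnorm2_nonneg {N n : ℕ} (Z : Tens N n) : 0 ≤ tnorm2 Z :=
  sum_nonneg fun _ _ => sum_nonneg fun _ _ => sum_nonneg fun _ _ => sq_nonneg _

lemma vnorm2_sub_mul {N : ℕ} (v w : Fin N → ℝ) (t : ℝ) :
    vnorm2 (fun γ => v γ - t * w γ) = vnorm2 v - 2 * t * ∑ γ, v γ * w γ + t ^ 2 * vnorm2 w := by
  simp only [vnorm2, mul_sum, ← sum_sub_distrib, ← sum_add_distrib]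
  exact sum_congr rfl fun γ _ => by ring

lemma le_sq_mul_of_sqrt_le_mul_sqrt {a b M : ℝ} (hb : 0 ≤ b) (h : √a ≤ M * √b) :
    a ≤ M ^ 2 * b := by
  rw [Real.sqrt_le_iff, mul_pow, Real.sq_sqrt hb] at h
  exact h.2

lemma MeasureTheory.MemLp.ae_le_toReal_eLpNorm_top {α : Type*} [MeasurableSpace α] {μ : Measure α}
    {f : α → ℝ} (hf : MemLp f ⊤ μ) : ∀ᵐ x ∂μ, f x ≤ (eLpNorm f ⊤ μ).toReal := by
  filter_upwards [ae_le_lpNorm_exponent_top hf] with x hx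
  rw [toReal_eLpNorm hf.aestronglyMeasurable]
  exact (le_abs_self _).trans hx

lemma exists_pos_forall_ge_two_div_mul_add_one_sub_lt_one {r K : ℝ} (hr : r < 1) (hK : 0 ≤ K) :
    ∃ σ₀ > 0, ∀ σ ≥ σ₀, 2 / σ * (r + 1 / (2 * σ) * K) + (1 - 2 / σ) < 1 := by
  have hδ : 0 < 2 * (1 - r) := by linarith
  have hσ₀ : 0 ≤ K / (2 * (1 - r)) := div_nonneg hK hδ.le
  refine ⟨K / (2 * (1 - r)) + 1, by linarith, fun σ hσ => ?_⟩
  have hσ0 : 0 < σ := by linarith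
  have hKσ : K / (2 * σ) < 1 - r := by
    have : K ≤ (σ - 1) * (2 * (1 - r)) := by rw [← div_le_iff₀ hδ]; linarith
    rw [div_lt_iff₀ (by positivity)]
    nlinarith
  have hsum : r + 1 / (2 * σ) * K < 1 := by rw [one_div_mul_eq_div]; linarith
  have : 2 / σ * (r + 1 / (2 * σ) * K) < 2 / σ := by
    simpa using mul_lt_mul_of_pos_left hsum (by positivity : 0 < 2 / σ)
  linarith

/-- The K-condition at one point `x`, with `a = α(x)`, `C ≥ ‖α‖_∞`, `v = A:Z` and
`w = F(x,X+Z) − F(x,X)`. -/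
lemma vnorm2_sub_div_mul_le {N : ℕ} (v w : Fin N → ℝ) {a C lam kap ν M σ z : ℝ}
    (ha : 0 < a) (haC : a ≤ C) (hlam : 0 < lam) (hν : ν ≠ 0) (hσ : 0 < σ)
    (hell : lam / a * vnorm2 v - kap / a * ν ^ 2 * z ≤ ∑ γ, v γ * w γ)
    (hlip : vnorm2 w ≤ M ^ 2 * z) :
    vnorm2 (fun γ => v γ - a / (lam * σ) * w γ) ≤
      2 / σ * (kap / lam + 1 / (2 * σ) * (M * C / (lam * ν)) ^ 2) * ν ^ 2 * z
        + (1 - 2 / σ) * vnorm2 v := by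
  set t := a / (lam * σ)
  have ht : 0 ≤ t := by positivity
  have htC : t ≤ C / (lam * σ) := div_le_div_of_nonneg_right haC (by positivity)
  have hcross : 2 / σ * vnorm2 v - 2 * kap / (lam * σ) * ν ^ 2 * z ≤ 2 * t * ∑ γ, v γ * w γ := by
    have heq : 2 * t * (lam / a * vnorm2 v - kap / a * ν ^ 2 * z)
        = 2 / σ * vnorm2 v - 2 * kap / (lam * σ) * ν ^ 2 * z := by
      simp only [t]
      field_simp
    rw [← heq]
    exact mul_le_mul_of_nonneg_left hell (by positivity)
  have hquad : t ^ 2 * vnorm2 w ≤ (C / (lam * σ)) ^ 2 * (M ^ 2 * z) :=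
    mul_le_mul (pow_le_pow_left₀ ht htC 2) hlip (vnorm2_nonneg w) (sq_nonneg _)
  have hβ : 2 / σ * (kap / lam + 1 / (2 * σ) * (M * C / (lam * ν)) ^ 2) * ν ^ 2 * z
      = 2 * kap / (lam * σ) * ν ^ 2 * z + (C / (lam * σ)) ^ 2 * (M ^ 2 * z) := by
    field_simp
  rw [vnorm2_sub_mul, hβ]
  linarith

theorem stmt7_general {n N : ℕ} (Ω : Set (Fin n → ℝ))
    (F : (Fin n → ℝ) → Tens N n → Fin N → ℝ)
    (A : Fin N → Fin N → Fin n → Fin n → ℝ)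
    (ν : ℝ) (hν : 0 < ν)
    (lam kap : ℝ) (hkap : 0 < kap) (hlk : kap < lam)
    (al : (Fin n → ℝ) → ℝ)
    (hal : MemLp al ⊤ (volume.restrict Ω))
    (halpos : ∀ᵐ x ∂(volume.restrict Ω), 0 < al x)
    (hellip : ∀ᵐ x ∂(volume.restrict Ω), ∀ X Z : Tens N n,
      ∑ γ, contA A Z γ * (F x (X + Z) γ - F x X γ) ≥
        lam / al x * vnorm2 (contA A Z) - kap / al x * ν ^ 2 * tnorm2 Z)
    (M : ℝ)
    (hLip : ∀ᵐ x ∂(volume.restrict Ω), ∀ X Y : Tens N n,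
      Real.sqrt (vnorm2 (fun γ => F x Y γ - F x X γ)) ≤ M * Real.sqrt (tnorm2 (Y - X))) :
    ∃ σ₀ : ℝ, 0 < σ₀ ∧ ∀ σ : ℝ, σ₀ ≤ σ →
      ((2 / σ) * (kap / lam +
          (1 / (2 * σ)) * (M * (eLpNorm al ⊤ (volume.restrict Ω)).toReal / (lam * ν)) ^ 2)
        + (1 - 2 / σ) < 1) ∧
      (∀ᵐ x ∂(volume.restrict Ω), ∀ X Z : Tens N n,
        vnorm2 (fun γ => contA A Z γ - (al x / (lam * σ)) * (F x (X + Z) γ - F x X γ)) ≤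
          ((2 / σ) * (kap / lam +
            (1 / (2 * σ)) * (M * (eLpNorm al ⊤ (volume.restrict Ω)).toReal / (lam * ν)) ^ 2))
              * ν ^ 2 * tnorm2 Z
            + (1 - 2 / σ) * vnorm2 (contA A Z)) := by
  have hlam : 0 < lam := hkap.trans hlk
  obtain ⟨σ₀, hσ₀, hβγ⟩ := exists_pos_forall_ge_two_div_mul_add_one_sub_lt_one
    ((div_lt_one hlam).2 hlk)
    (sq_nonneg (M * (eLpNorm al ⊤ (volume.restrict Ω)).toReal / (lam * ν)))
  refine ⟨σ₀, hσ₀, fun σ hσ => ⟨hβγ σ hσ, ?_⟩⟩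
  filter_upwards [halpos, hal.ae_le_toReal_eLpNorm_top, hellip, hLip]
    with x hx0 hxC hxell hxlip X Z
  have hlipZ := hxlip X (X + Z)
  rw [add_sub_cancel_left] at hlipZ
  exact vnorm2_sub_div_mul_le _ _ hx0 hxC hlam hν.ne' (hσ₀.trans_le hσ)
    (hxell X Z) (le_sq_mul_of_sqrt_le_mul_sqrt (tnorm2_nonneg Z) hlipZ)

/-- Definition 1 ellipticity + Lipschitz ⇒ K-condition: if `F` satisfies
Definition 1 ellipticity with data `(A, ν(A), λ > κ > 0, α)` and `F(x,·)` is `M`-Lipschitz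
uniformly in `x`, then for all sufficiently large `σ`, `F` satisfies the K-condition with
weight `α/(λσ)` and constants `β(σ) = (2/σ)(κ/λ + (1/(2σ))(M‖α‖_∞/(λν(A)))²)`,
`γ(σ) = 1 − 2/σ`, which satisfy `β(σ) + γ(σ) < 1`. -/
theorem stmt7 {n N : ℕ} (Ω : Set (Fin n → ℝ)) (hΩ : IsOpen Ω)
    (F : (Fin n → ℝ) → Tens N n → Fin N → ℝ)
    (hFmeas : ∀ X : Tens N n, Measurable fun x => F x X)
    (hFcont : ∀ᵐ x ∂(volume.restrict Ω), Continuous fun X => F x X)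
    (A : Fin N → Fin N → Fin n → Fin n → ℝ)
    (hsymm : ∀ α β i j, A α β i j = A β α j i) (ν : ℝ) (hν : 0 < ν)
    (hrank1 : ∀ (η : Fin N → ℝ) (a : Fin n → ℝ),
      ∑ α, ∑ β, ∑ i, ∑ j, A α β i j * η α * a i * η β * a j ≥
        ν * (∑ α, (η α) ^ 2) * (∑ i, (a i) ^ 2))
    (lam kap : ℝ) (hkap : 0 < kap) (hlk : kap < lam)
    (al : (Fin n → ℝ) → ℝ)
    (hal : MemLp al ⊤ (volume.restrict Ω))
    (halpos : ∀ᵐ x ∂(volume.restrict Ω), 0 < al x)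
    (halinv : MemLp (fun x => (al x)⁻¹) ⊤ (volume.restrict Ω))
    (hellip : ∀ᵐ x ∂(volume.restrict Ω), ∀ X Z : Tens N n,
      ∑ γ, contA A Z γ * (F x (X + Z) γ - F x X γ) ≥
        lam / al x * vnorm2 (contA A Z) - kap / al x * ν ^ 2 * tnorm2 Z)
    (M : ℝ) (hM : 0 < M)
    (hLip : ∀ᵐ x ∂(volume.restrict Ω), ∀ X Y : Tens N n,
      Real.sqrt (vnorm2 (fun γ => F x Y γ - F x X γ)) ≤ M * Real.sqrt (tnorm2 (Y - X))) :
    ∃ σ₀ : ℝ, 0 < σ₀ ∧ ∀ σ : ℝ, σ₀ ≤ σ →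
      ((2 / σ) * (kap / lam +
          (1 / (2 * σ)) * (M * (eLpNorm al ⊤ (volume.restrict Ω)).toReal / (lam * ν)) ^ 2)
        + (1 - 2 / σ) < 1) ∧
      (∀ᵐ x ∂(volume.restrict Ω), ∀ X Z : Tens N n,
        vnorm2 (fun γ => contA A Z γ - (al x / (lam * σ)) * (F x (X + Z) γ - F x X γ)) ≤
          ((2 / σ) * (kap / lam +
            (1 / (2 * σ)) * (M * (eLpNorm al ⊤ (volume.restrict Ω)).toReal / (lam * ν)) ^ 2))
              * ν ^ 2 * tnorm2 Z
            + (1 - 2 / σ) * vnorm2 (contA A Z)) :=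
  stmt7_general Ω F A ν hν lam kap hkap hlk al hal halpos hellip M hLip
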